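/- arXiv:2006.10354 — 3 statements merged into one kernel-verified Lean document; each statement's English description precedes it below -/
import Mathlib

section
/- Let (X, μ) be a measure space, v ∈ L^1(X, μ), and k̄ > 0. For k > 0 set g(k) := ∫_X max(|v(x)| − k, 0) dμ(x) and A_k := {x ∈ X : |v(x)| > k}. Suppose there exist constants C > 0 and s > 1 such that g(k) ≤ C μ(A_k)^s for every k ≥ k̄. Then v ∈ L^∞(X, μ) and ‖v‖_{L^∞(X,μ)} ≤ C^{1/s} · (s/(s−1)) · ‖v‖_{L^1(X,μ)}^{1 − 1/s} + k̄. -/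
/-!
Write `g(k) = ∫ (|v| - k)⁺ dμ` and `m(k) = μ {|v| > k}`. For `0 < k < t` the difference quotient
`(g t - g k) / (t - k)` lies between `-m(k)` and `-m(t)`, and `m` is right-continuous, so `g` has
right derivative `-m`. Under `g ≤ C m^s` the power `g^(1-1/s)` therefore decreases with slope at
most `-(1 - 1/s) C^(-1/s)` while `g > 0`, hence `g` vanishes beyond
`k̄ + C^(1/s) (s/(s-1)) g(k̄)^(1-1/s)`; and `g(k) = 0` means `|v| ≤ k` a.e. Finally `g(k̄) ≤ ‖v‖₁`.
-/

open MeasureTheory Set Filter Topology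

lemma rpow_neg_inv_le_mul_rpow_neg_inv {g m C s : ℝ} (hg : 0 < g) (hm : 0 ≤ m) (hC : 0 < C)
    (hs : 0 < s) (h : g ≤ C * m ^ s) : C ^ (-s⁻¹) ≤ m * g ^ (-s⁻¹) := by
  have hroot : (g / C) ^ s⁻¹ ≤ m :=
    (Real.rpow_inv_le_iff_of_pos (div_nonneg hg.le hC.le) hm hs).2 <| by
      rwa [div_le_iff₀' hC]
  calc C ^ (-s⁻¹) = (g / C) ^ s⁻¹ * g ^ (-s⁻¹) := by
        rw [Real.div_rpow hg.le hC.le, Real.rpow_neg hC.le, Real.rpow_neg hg.le]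
        field_simp [(Real.rpow_pos_of_pos hg s⁻¹).ne']
    _ ≤ m * g ^ (-s⁻¹) := by gcongr

lemma rpow_one_div_mul_div_sub_one_pos {C s : ℝ} (hC : 0 < C) (hs : 1 < s) :
    0 < C ^ (1 / s) * (s / (s - 1)) :=
  mul_pos (Real.rpow_pos_of_pos hC _) (div_pos (by linarith) (by linarith))

lemma sub_le_of_le_mul_rpow_neg_deriv {g m : ℝ → ℝ} {a b C s : ℝ} (hab : a ≤ b) (hC : 0 < C)
    (hs : 1 < s) (hg : ContinuousOn g (Icc a b))
    (hg' : ∀ k ∈ Ico a b, HasDerivWithinAt g (-m k) (Ici k) k) (hm : ∀ k ∈ Ico a b, 0 ≤ m k)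
    (hpos : ∀ k ∈ Icc a b, 0 < g k) (hgm : ∀ k ∈ Ico a b, g k ≤ C * m k ^ s) :
    b - a ≤ C ^ (1 / s) * (s / (s - 1)) * (g a ^ (1 - 1 / s) - g b ^ (1 - 1 / s)) := by
  set D := C ^ (1 / s) * (s / (s - 1)) with hD
  have hDpos : 0 < D := rpow_one_div_mul_div_sub_one_pos hC hs
  have hinvD : D⁻¹ = (1 - 1 / s) * C ^ (-s⁻¹) := by
    rw [hD, Real.rpow_neg hC.le, one_div]
    field_simp
  have fence := image_le_of_deriv_right_le_deriv_boundary (a := a) (b := b)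
    (f := fun k => g k ^ (1 - 1 / s)) (B := fun r => g a ^ (1 - 1 / s) - (r - a) * D⁻¹)
    (hg.rpow_const fun k hk => .inl (hpos k hk).ne')
    (fun k hk => (hg' k hk).rpow_const (.inl (hpos k (Ico_subset_Icc_self hk)).ne'))
    (by simp) (by fun_prop)
    (fun k _ => (((hasDerivAt_id k).sub_const a).mul_const D⁻¹).const_sub _ |>.hasDerivWithinAt)
    (fun k hk => by
      have key := rpow_neg_inv_le_mul_rpow_neg_inv (hpos k (Ico_subset_Icc_self hk)) (hm k hk) hC
        (by linarith) (hgm k hk)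
      have hθ : 0 ≤ 1 - 1 / s := by rw [sub_nonneg, div_le_one (by linarith)]; exact hs.le
      rw [show 1 - 1 / s - 1 = -s⁻¹ by ring, hinvD, one_mul]
      nlinarith [mul_le_mul_of_nonneg_left key hθ])
    (right_mem_Icc.2 hab)
  rw [le_sub_iff_add_le, ← le_sub_iff_add_le', ← div_eq_mul_inv, div_le_iff₀ hDpos] at fence
  linarith

section Excess

variable {X : Type*} [MeasurableSpace X]

noncomputable def excess (μ : Measure X) (f : X → ℝ) (k : ℝ) : ℝ :=
  ∫ x, max (f x - k) 0 ∂μ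

variable {μ : Measure X} {f : X → ℝ} {k k₁ k₂ K a b C s : ℝ}

lemma excess_nonneg : 0 ≤ excess μ f k :=
  integral_nonneg fun _ => le_max_right _ _

lemma integrable_max_sub_const (hf : Integrable f μ) (hk : 0 ≤ k) :
    Integrable (fun x => max (f x - k) 0) μ :=
  hf.abs.mono' ((hf.aestronglyMeasurable.sub aestronglyMeasurable_const).sup
    aestronglyMeasurable_const) <| ae_of_all _ fun x => by
      rw [Real.norm_of_nonneg (le_max_right _ _)]
      exact max_le (by linarith [le_abs_self (f x)]) (abs_nonneg _)

lemma excess_le_integral_abs (hf : Integrable f μ) (hk : 0 ≤ k) :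
    excess μ f k ≤ ∫ x, |f x| ∂μ :=
  integral_mono (integrable_max_sub_const hf hk) hf.abs fun x =>
    max_le (by linarith [le_abs_self (f x)]) (abs_nonneg _)

lemma continuousOn_excess (hf : Integrable f μ) : ContinuousOn (excess μ f) (Ici 0) := by
  refine continuousOn_of_dominated (fun k hk => (integrable_max_sub_const hf hk).1)
    (fun k hk => ae_of_all _ fun x => ?_) hf.abs (ae_of_all _ fun x => by fun_prop)
  rw [Real.norm_of_nonneg (le_max_right _ _)]
  exact max_le (by linarith [le_abs_self (f x), mem_Ici.1 hk]) (abs_nonneg _)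

lemma integrable_indicator_setOf_lt (hf : Integrable f μ) (hk : 0 < k) (c : ℝ) :
    Integrable ({x | k < f x}.indicator fun _ => c) μ :=
  (integrableOn_const (hf.measure_gt_lt_top hk).ne).integrable_indicator₀
    (nullMeasurableSet_lt aemeasurable_const hf.aemeasurable)

lemma integral_indicator_setOf_lt (hf : AEMeasurable f μ) (c : ℝ) :
    ∫ x, {x | k < f x}.indicator (fun _ => c) x ∂μ = μ.real {x | k < f x} * c := by
  rw [integral_indicator₀ (nullMeasurableSet_lt aemeasurable_const hf), setIntegral_const,
    smul_eq_mul]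

lemma integrable_max_sub_const_sub (hf : Integrable f μ) (hk₁ : 0 ≤ k₁) (hk₂ : 0 ≤ k₂) :
    Integrable (fun x => max (f x - k₁) 0 - max (f x - k₂) 0) μ :=
  (integrable_max_sub_const hf hk₁).sub (integrable_max_sub_const hf hk₂)

lemma excess_sub_excess (hf : Integrable f μ) (hk₁ : 0 ≤ k₁) (hk₂ : 0 ≤ k₂) :
    excess μ f k₁ - excess μ f k₂ = ∫ x, (max (f x - k₁) 0 - max (f x - k₂) 0) ∂μ :=
  (integral_sub (integrable_max_sub_const hf hk₁) (integrable_max_sub_const hf hk₂)).symm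

lemma excess_sub_excess_le (hf : Integrable f μ) (hk₁ : 0 < k₁) (hk : k₁ ≤ k₂) :
    excess μ f k₁ - excess μ f k₂ ≤ μ.real {x | k₁ < f x} * (k₂ - k₁) := by
  have hk₂ := hk₁.le.trans hk
  rw [excess_sub_excess hf hk₁.le hk₂, ← integral_indicator_setOf_lt hf.aemeasurable]
  refine integral_mono (integrable_max_sub_const_sub hf hk₁.le hk₂)
    (integrable_indicator_setOf_lt hf hk₁ _) fun x => ?_
  simp only [indicator, mem_ofPred_eq]
  split_ifs <;> grind

lemma le_excess_sub_excess (hf : Integrable f μ) (hk₁ : 0 < k₁) (hk : k₁ ≤ k₂) :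
    μ.real {x | k₂ < f x} * (k₂ - k₁) ≤ excess μ f k₁ - excess μ f k₂ := by
  have hk₂ := hk₁.le.trans hk
  rw [excess_sub_excess hf hk₁.le hk₂, ← integral_indicator_setOf_lt hf.aemeasurable]
  refine integral_mono (integrable_indicator_setOf_lt hf (hk₁.trans_le hk) _)
    (integrable_max_sub_const_sub hf hk₁.le hk₂) fun x => ?_
  simp only [indicator, mem_ofPred_eq]
  split_ifs <;> grind

lemma tendsto_measureReal_setOf_lt_nhdsGT (hf : AEMeasurable f μ)
    (hk : μ {x | k < f x} ≠ ⊤) :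
    Tendsto (fun t => μ.real {x | t < f x}) (𝓝[>] k) (𝓝 (μ.real {x | k < f x})) := by
  have hmk : ∀ t, μ {x | t < f x} = μ {x | t < hf.mk f x} := fun t =>
    measure_congr <| hf.ae_eq_mk.mono fun x hx => congrArg (t < ·) hx
  refine (ENNReal.tendsto_toReal hk).comp ?_
  simp only [hmk] at hk ⊢
  refine tendsto_measure_of_tendsto_indicator _
    (fun t => measurableSet_lt measurable_const hf.measurable_mk)
    (measurableSet_lt measurable_const hf.measurable_mk) hk
    (eventually_nhdsWithin_of_forall fun t ht x hx => (mem_Ioi.1 ht).trans hx) fun x => ?_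
  by_cases hx : k < hf.mk f x
  · filter_upwards [Ioo_mem_nhdsGT hx] with t ht
    simp [ht.2, hx]
  · filter_upwards [self_mem_nhdsWithin] with t (ht : k < t)
    simp only [hx, iff_false, not_lt]
    linarith [not_lt.1 hx]

lemma hasDerivWithinAt_excess (hf : Integrable f μ) (hk : 0 < k) :
    HasDerivWithinAt (excess μ f) (-μ.real {x | k < f x}) (Ici k) k := by
  rw [← hasDerivWithinAt_Ioi_iff_Ici, hasDerivWithinAt_iff_tendsto_slope,
    sdiff_singleton_eq_self self_notMem_Ioi]
  refine tendsto_of_tendsto_of_tendsto_of_le_of_le' tendsto_const_nhds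
    (tendsto_measureReal_setOf_lt_nhdsGT hf.aemeasurable (hf.measure_gt_lt_top hk).ne).neg
    ?_ ?_ <;> filter_upwards [self_mem_nhdsWithin] with t (ht : k < t)
  · rw [slope_def_field, le_div_iff₀ (sub_pos.2 ht)]
    linarith [excess_sub_excess_le hf hk ht.le]
  · rw [slope_def_field, div_le_iff₀ (sub_pos.2 ht)]
    linarith [le_excess_sub_excess hf hk ht.le]

lemma antitoneOn_excess (hf : Integrable f μ) : AntitoneOn (excess μ f) (Ioi 0) :=
  fun k₁ hk₁ k₂ _ hk => by
    nlinarith [le_excess_sub_excess hf hk₁ hk, measureReal_nonneg (μ := μ) (s := {x | k₂ < f x})]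

lemma ae_le_of_excess_eq_zero (hf : Integrable f μ) (hK : 0 ≤ K)
    (h : ∀ b, K < b → excess μ f b = 0) : ∀ᵐ x ∂μ, f x ≤ K := by
  have hle : ∀ n : ℕ, ∀ᵐ x ∂μ, f x ≤ K + 1 / (n + 1) := fun n => by
    have hb : K < K + 1 / (n + 1) := lt_add_of_pos_right K Nat.one_div_pos_of_nat
    filter_upwards [(integral_eq_zero_iff_of_nonneg (fun x => le_max_right _ _)
      (integrable_max_sub_const hf (hK.trans hb.le))).1 (h _ hb)] with x hx
    rw [Pi.zero_apply] at hx
    linarith [le_max_left (f x - (K + 1 / (n + 1))) 0]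
  filter_upwards [ae_all_iff.2 hle] with x hx
  simpa using ge_of_tendsto' (tendsto_const_nhds.add tendsto_one_div_add_atTop_nhds_zero_nat) hx

lemma excess_eq_zero_of_le (hf : Integrable f μ) (ha : 0 < a) (hC : 0 < C) (hs : 1 < s)
    (h : ∀ k, a ≤ k → excess μ f k ≤ C * μ.real {x | k < f x} ^ s)
    (hb : a + C ^ (1 / s) * (s / (s - 1)) * excess μ f a ^ (1 - 1 / s) ≤ b) :
    excess μ f b = 0 := by
  have hD := rpow_one_div_mul_div_sub_one_pos hC hs
  have hab : a ≤ b :=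
    (le_add_of_nonneg_right (mul_nonneg hD.le (Real.rpow_nonneg excess_nonneg _))).trans hb
  by_contra hne
  have hpos : ∀ k ∈ Icc a b, 0 < excess μ f k := fun k hk =>
    (excess_nonneg.lt_of_ne' hne).trans_le <|
      antitoneOn_excess hf (ha.trans_le hk.1) (ha.trans_le hab) hk.2
  have hlen := sub_le_of_le_mul_rpow_neg_deriv hab hC hs
    ((continuousOn_excess hf).mono fun k hk => ha.le.trans hk.1)
    (fun k hk => hasDerivWithinAt_excess hf (ha.trans_le hk.1)) (fun _ _ => measureReal_nonneg)
    hpos fun k hk => h k hk.1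
  nlinarith [mul_pos hD (Real.rpow_pos_of_pos (hpos b (right_mem_Icc.2 hab)) (1 - 1 / s))]

lemma ae_le_add_mul_excess_rpow (hf : Integrable f μ) (ha : 0 < a) (hC : 0 < C) (hs : 1 < s)
    (h : ∀ k, a ≤ k → excess μ f k ≤ C * μ.real {x | k < f x} ^ s) :
    ∀ᵐ x ∂μ, f x ≤ a + C ^ (1 / s) * (s / (s - 1)) * excess μ f a ^ (1 - 1 / s) :=
  ae_le_of_excess_eq_zero hf (ha.le.trans (le_add_of_nonneg_right (mul_nonneg
    (rpow_one_div_mul_div_sub_one_pos hC hs).le (Real.rpow_nonneg excess_nonneg _))))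
    fun _ hb => excess_eq_zero_of_le hf ha hC hs h hb.le

end Excess

/-- If `g(k) = ∫ max(|v| - k, 0) dμ ≤ C μ({|v| > k})^s` for all `k ≥ k̄`,
then `v ∈ L^∞` and `‖v‖_∞ ≤ C^{1/s} (s/(s-1)) ‖v‖_{L¹}^{1 - 1/s} + k̄`. -/
theorem linfty_bound_of_level_set_estimate
    {X : Type*} [MeasurableSpace X] (μ : Measure X) (v : X → ℝ)
    (hv : Integrable v μ) (kbar : ℝ) (hkbar : 0 < kbar)
    (C s : ℝ) (hC : 0 < C) (hs : 1 < s)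
    (h : ∀ k : ℝ, kbar ≤ k →
      ∫ x, max (|v x| - k) 0 ∂μ ≤ C * (μ {x | k < |v x|}).toReal ^ s) :
    MemLp v ⊤ μ ∧
      (eLpNorm v ⊤ μ).toReal ≤
        C ^ (1 / s) * (s / (s - 1)) * (∫ x, |v x| ∂μ) ^ (1 - 1 / s) + kbar := by
  have hbound : ∀ᵐ x ∂μ, ‖v x‖ ≤
      C ^ (1 / s) * (s / (s - 1)) * (∫ x, |v x| ∂μ) ^ (1 - 1 / s) + kbar := by
    filter_upwards [ae_le_add_mul_excess_rpow hv.abs hkbar hC hs h] with x hx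
    calc ‖v x‖ = |v x| := Real.norm_eq_abs _
      _ ≤ kbar + C ^ (1 / s) * (s / (s - 1)) * excess μ (|v ·|) kbar ^ (1 - 1 / s) := hx
      _ ≤ _ := by
        have hθ : 0 ≤ 1 - 1 / s := by rw [sub_nonneg, div_le_one (by linarith)]; exact hs.le
        rw [add_comm]
        gcongr
        · exact excess_nonneg
        · simpa using excess_le_integral_abs hv.abs hkbar.le
  refine ⟨memLp_top_of_bound hv.aestronglyMeasurable _ hbound, ?_⟩
  rw [eLpNorm_exponent_top]
  exact ENNReal.toReal_le_of_le_ofReal (by positivity) (eLpNormEssSup_le_of_ae_bound hbound)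
end

section
/- Let (X, μ) be a finite measure space and let v ∈ L^1(X, μ). For k > 0 set g(k) := ∫_X max(|v(x)| − k, 0) dμ(x) and A_k := {x ∈ X : |v(x)| > k}. Suppose there exist constants C > 0 and s > 1 such that g(k) ≤ C μ(A_k)^s for every k > 0. Then v ∈ L^∞(X, μ) and ‖v‖_{L^∞(X,μ)} ≤ C · (s/(s−1))^s · μ(X)^{s−1}. -/
/-!
Write `g(k) = ∫ (u - k)⁺ dμ`. Since `g(k) - g(k') ≥ (k' - k) μ{u > k'}`, the hypothesis is a
discrete form of the differential inequality `g ≤ C (-g')^s`, which forces `g^(1 - 1/s)` to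
decrease with slope at least `(1 - 1/s) C^(-1/s)` as long as `g > 0`. As `g(0⁺) ≤ C μ(X)^s`,
`g` vanishes from `K = C s/(s-1) μ(X)^(s-1)` on (this `K` is at most the claimed bound), and
`g(K) = 0` says `u ≤ K` almost everywhere.
-/

open MeasureTheory Set Filter Topology

namespace MeasureTheory

variable {X : Type*} [MeasurableSpace X] {μ : Measure X} {u : X → ℝ}

noncomputable def excessIntegral (μ : Measure X) (u : X → ℝ) (k : ℝ) : ℝ :=
  ∫ x, max (u x - k) 0 ∂μ

lemma excessIntegral_nonneg (k : ℝ) : 0 ≤ excessIntegral μ u k :=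
  integral_nonneg fun _ => le_max_right _ _

def LevelSetEstimate (μ : Measure X) (u : X → ℝ) (C s : ℝ) : Prop :=
  ∀ k, 0 < k → excessIntegral μ u k ≤ C * μ.real {x | k < u x} ^ s

section FiniteMeasure

variable [IsFiniteMeasure μ]

lemma Integrable.max_sub_const_zero (hu : Integrable u μ) (k : ℝ) :
    Integrable (fun x => max (u x - k) 0) μ :=
  (hu.sub (integrable_const k)).pos_part

lemma antitone_excessIntegral (hu : Integrable u μ) : Antitone (excessIntegral μ u) :=
  fun _ _ hkk' => integral_mono (hu.max_sub_const_zero _) (hu.max_sub_const_zero _)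
    fun _ => max_le_max (by linarith) le_rfl

lemma lipschitzWith_excessIntegral (hu : Integrable u μ) :
    LipschitzWith (μ.real univ).toNNReal (excessIntegral μ u) := by
  refine LipschitzWith.of_dist_le' fun k k' => ?_
  rw [Real.dist_eq, Real.dist_eq, excessIntegral, excessIntegral,
    ← integral_sub (hu.max_sub_const_zero k) (hu.max_sub_const_zero k'), mul_comm,
    ← Real.norm_eq_abs]
  refine norm_integral_le_of_norm_le_const (Eventually.of_forall fun x => ?_)
  simpa [Real.norm_eq_abs, abs_sub_comm] using abs_max_sub_max_le_abs (u x - k) (u x - k') 0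

lemma mul_measureReal_le_excessIntegral_sub (hu : Integrable u μ) {k k' : ℝ} (hkk' : k ≤ k') :
    (k' - k) * μ.real {x | k' < u x} ≤ excessIntegral μ u k - excessIntegral μ u k' := by
  have markov := mul_meas_ge_le_integral_of_nonneg
    (Eventually.of_forall fun x =>
      sub_nonneg.2 (max_le_max (by linarith : u x - k' ≤ u x - k) le_rfl))
    ((hu.max_sub_const_zero k).sub (hu.max_sub_const_zero k')) (k' - k)
  rw [integral_sub (hu.max_sub_const_zero k) (hu.max_sub_const_zero k')] at markov
  refine le_trans (mul_le_mul_of_nonneg_left (measureReal_mono fun x (hx : k' < u x) => ?_)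
    (sub_nonneg.2 hkk')) markov
  simp only [mem_ofPred_eq]
  rw [max_eq_left (by linarith), max_eq_left (by linarith)]
  linarith

variable {C s : ℝ}

lemma LevelSetEstimate.mul_sub_mul_rpow_le (hlevel : LevelSetEstimate μ u C s)
    (hu : Integrable u μ) (hC : 0 < C) (hs : 1 < s)
    {k k' : ℝ} (hk : 0 < k) (hkk' : k ≤ k') :
    (1 - s⁻¹) * (k' - k) * excessIntegral μ u k' ^ s⁻¹ ≤
      C ^ s⁻¹ * excessIntegral μ u k ^ s⁻¹ *
        (excessIntegral μ u k ^ (1 - s⁻¹) - excessIntegral μ u k' ^ (1 - s⁻¹)) := by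
  set a := excessIntegral μ u k
  set b := excessIntegral μ u k'
  set m := μ.real {x | k' < u x}
  have ha : 0 ≤ a := excessIntegral_nonneg k
  have hb : 0 ≤ b := excessIntegral_nonneg k'
  have hm : 0 ≤ m := measureReal_nonneg
  have hs₀ : 0 < s⁻¹ := inv_pos.2 (by linarith)
  have hs₁ : s⁻¹ < 1 := inv_lt_one_of_one_lt₀ hs
  have hb_le : b ^ s⁻¹ ≤ C ^ s⁻¹ * m := by
    calc b ^ s⁻¹ ≤ (C * m ^ s) ^ s⁻¹ :=
          Real.rpow_le_rpow hb (hlevel k' (by linarith)) hs₀.le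
      _ = C ^ s⁻¹ * m := by
          rw [Real.mul_rpow hC.le (by positivity), Real.rpow_rpow_inv hm (by linarith)]
  have amgm : a ^ s⁻¹ * b ^ (1 - s⁻¹) ≤ s⁻¹ * a + (1 - s⁻¹) * b :=
    Real.geom_mean_le_arith_mean2_weighted hs₀.le (by linarith) ha hb (by ring)
  have ha_split : a ^ s⁻¹ * a ^ (1 - s⁻¹) = a := by
    rw [← Real.rpow_add' ha (by norm_num), add_sub_cancel, Real.rpow_one]
  calc (1 - s⁻¹) * (k' - k) * b ^ s⁻¹
      ≤ (1 - s⁻¹) * (k' - k) * (C ^ s⁻¹ * m) := by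
        gcongr
    _ = C ^ s⁻¹ * ((1 - s⁻¹) * ((k' - k) * m)) := by ring
    _ ≤ C ^ s⁻¹ * ((1 - s⁻¹) * (a - b)) := by
        gcongr
        exact mul_measureReal_le_excessIntegral_sub hu hkk'
    _ ≤ C ^ s⁻¹ * (a ^ s⁻¹ * (a ^ (1 - s⁻¹) - b ^ (1 - s⁻¹))) := by
        refine mul_le_mul_of_nonneg_left ?_ (by positivity)
        nlinarith
    _ = _ := by ring

lemma LevelSetEstimate.mul_sub_le_rpow_sub (hlevel : LevelSetEstimate μ u C s)
    (hu : Integrable u μ) (hC : 0 < C) (hs : 1 < s)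
    {a b : ℝ} (ha : 0 < a) (hab : a ≤ b) (hb : 0 < excessIntegral μ u b) :
    (1 - s⁻¹) * (b - a) ≤
      C ^ s⁻¹ *
        (excessIntegral μ u a ^ (1 - s⁻¹) - excessIntegral μ u b ^ (1 - s⁻¹)) := by
  set g := excessIntegral μ u
  set φ : ℝ → ℝ := fun t => g t ^ (1 - s⁻¹)
  set c := (1 - s⁻¹) / C ^ s⁻¹
  have hs₀ : 0 < s⁻¹ := inv_pos.2 (by linarith)
  have hs₁ : s⁻¹ < 1 := inv_lt_one_of_one_lt₀ hs
  have hCs : 0 < C ^ s⁻¹ := Real.rpow_pos_of_pos hC _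
  have hg : Continuous g := (lipschitzWith_excessIntegral hu).continuous
  have hφ : Continuous φ := hg.rpow_const fun _ => Or.inr (by linarith)
  -- as `z ↓ x` the slope of `φ` on `[x, z]` is at most `-c (g z / g x)^(1/s) → -c`
  have hline : φ b ≤ φ a - c * (b - a) := by
    refine image_le_of_liminf_slope_right_le_deriv_boundary
      (B := fun x => φ a - c * (x - a)) (B' := fun _ => -c) hφ.continuousOn
      (by simp) (by fun_prop) (fun x _ => ?_) (fun x hx r hr => ?_) (right_mem_Icc.2 hab)
    · simpa using (((hasDerivWithinAt_id x _).sub_const a).const_mul c).const_sub (φ a)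
    have hgx : 0 < g x := hb.trans_le (antitone_excessIntegral hu hx.2.le)
    set ψ : ℝ → ℝ := fun z => -(1 - s⁻¹) * g z ^ s⁻¹ / (C ^ s⁻¹ * g x ^ s⁻¹)
    have hψ : Tendsto ψ (𝓝[>] x) (𝓝 (-c)) := by
      have hψx : ψ x = -c := by
        simp only [ψ, c]
        field_simp
      rw [← hψx]
      refine (Continuous.tendsto ?_ x).mono_left nhdsWithin_le_nhds
      exact ((hg.rpow_const fun _ => Or.inr hs₀.le).const_mul _).div_const _
    refine Eventually.frequently ?_
    filter_upwards [hψ.eventually (gt_mem_nhds hr), self_mem_nhdsWithin] with z hψz hz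
    refine lt_of_le_of_lt ?_ hψz
    have hdec := hlevel.mul_sub_mul_rpow_le hu hC hs (ha.trans_le hx.1) (le_of_lt hz)
    rw [slope_def_field, div_le_iff₀ (sub_pos.2 hz), div_mul_eq_mul_div,
      le_div_iff₀ (by positivity)]
    nlinarith
  rw [div_mul_eq_mul_div, le_sub_iff_add_le, ← le_sub_iff_add_le', div_le_iff₀ hCs] at hline
  linarith

lemma LevelSetEstimate.excessIntegral_eq_zero_of_lt (hlevel : LevelSetEstimate μ u C s)
    (hu : Integrable u μ) (hC : 0 < C) (hs : 1 < s)
    {k : ℝ} (hk : C * (s / (s - 1)) * μ.real univ ^ (s - 1) < k) :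
    excessIntegral μ u k = 0 := by
  set M := μ.real univ
  set K := C * (s / (s - 1)) * M ^ (s - 1)
  have hM : 0 ≤ M := measureReal_nonneg
  have hK : 0 ≤ K := by
    have : 0 < s - 1 := by linarith
    positivity
  have hs₀ : 0 < s⁻¹ := inv_pos.2 (by linarith)
  have hs₁ : s⁻¹ < 1 := inv_lt_one_of_one_lt₀ hs
  by_contra hne
  have hgk : 0 < excessIntegral μ u k := (excessIntegral_nonneg k).lt_of_ne' hne
  have ha : 0 < (k - K) / 2 := by linarith
  have hga : excessIntegral μ u ((k - K) / 2) ≤ C * M ^ s :=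
    (hlevel _ ha).trans (by gcongr; exact measureReal_mono (subset_univ _))
  have hCM : C ^ s⁻¹ * (C * M ^ s) ^ (1 - s⁻¹) = C * M ^ (s - 1) := by
    rw [Real.mul_rpow hC.le (by positivity), ← Real.rpow_mul hM, ← mul_assoc,
      ← Real.rpow_add hC, add_sub_cancel, Real.rpow_one, mul_sub, mul_one,
      mul_inv_cancel₀ (by linarith)]
  have hdrop : (1 - s⁻¹) * (k - (k - K) / 2) ≤ C * M ^ (s - 1) := by
    calc (1 - s⁻¹) * (k - (k - K) / 2)
        ≤ C ^ s⁻¹ * (excessIntegral μ u ((k - K) / 2) ^ (1 - s⁻¹) -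
            excessIntegral μ u k ^ (1 - s⁻¹)) :=
          hlevel.mul_sub_le_rpow_sub hu hC hs ha (by linarith) hgk
      _ ≤ C ^ s⁻¹ * (C * M ^ s) ^ (1 - s⁻¹) := by
          refine mul_le_mul_of_nonneg_left ?_ (by positivity)
          refine (sub_le_self _ (by positivity)).trans ?_
          exact Real.rpow_le_rpow (excessIntegral_nonneg _) hga (by linarith)
      _ = C * M ^ (s - 1) := hCM
  have hKα : K * (1 - s⁻¹) = C * M ^ (s - 1) := by
    have : s - 1 ≠ 0 := by linarith
    simp only [K]
    field_simp
  nlinarith [mul_lt_mul_of_pos_left (by linarith : K < k - (k - K) / 2)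
    (by linarith : 0 < 1 - s⁻¹)]

lemma LevelSetEstimate.ae_le (hlevel : LevelSetEstimate μ u C s) (hu : Integrable u μ)
    (hC : 0 < C) (hs : 1 < s) :
    ∀ᵐ x ∂μ, u x ≤ C * (s / (s - 1)) * μ.real univ ^ (s - 1) := by
  set K := C * (s / (s - 1)) * μ.real univ ^ (s - 1)
  have hzero : excessIntegral μ u K = 0 := by
    have hclosed : IsClosed {k | excessIntegral μ u k = 0} :=
      isClosed_eq (lipschitzWith_excessIntegral hu).continuous continuous_const
    have hsub : Ioi K ⊆ {k | excessIntegral μ u k = 0} :=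
      fun k hk => hlevel.excessIntegral_eq_zero_of_lt hu hC hs hk
    exact hclosed.closure_subset_iff.2 hsub (by rw [closure_Ioi]; exact mem_Ici.2 le_rfl)
  rw [excessIntegral, integral_eq_zero_iff_of_nonneg (f := fun x => max (u x - K) 0)
    (fun x => le_max_right _ _) (hu.max_sub_const_zero K)] at hzero
  filter_upwards [hzero] with x hx
  simpa using hx

end FiniteMeasure
end MeasureTheory

/-- On a finite measure space, if
`g(k) = ∫ max(|v| - k, 0) dμ ≤ C μ({|v| > k})^s` for all `k > 0`, then `v ∈ L^∞` and
`‖v‖_∞ ≤ C (s/(s-1))^s μ(X)^{s-1}`. -/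
theorem linfty_bound_of_level_set_estimate_finite_measure
    {X : Type*} [MeasurableSpace X] (μ : Measure X) [IsFiniteMeasure μ]
    (v : X → ℝ) (hv : Integrable v μ)
    (C s : ℝ) (hC : 0 < C) (hs : 1 < s)
    (h : ∀ k : ℝ, 0 < k →
      ∫ x, max (|v x| - k) 0 ∂μ ≤ C * (μ {x | k < |v x|}).toReal ^ s) :
    MemLp v ⊤ μ ∧
      (eLpNorm v ⊤ μ).toReal ≤ C * (s / (s - 1)) ^ s * (μ Set.univ).toReal ^ (s - 1) := by
  have hK : C * (s / (s - 1)) * μ.real univ ^ (s - 1) ≤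
      C * (s / (s - 1)) ^ s * μ.real univ ^ (s - 1) := by
    have : 1 ≤ s / (s - 1) := by rw [one_le_div (by linarith)]; linarith
    gcongr
    exact Real.self_le_rpow_of_one_le this hs.le
  have hbound : ∀ᵐ x ∂μ, ‖v x‖ ≤ C * (s / (s - 1)) ^ s * μ.real univ ^ (s - 1) :=
    (LevelSetEstimate.ae_le h hv.abs hC hs).mono fun x hx => hx.trans hK
  refine ⟨memLp_top_of_bound hv.1 _ hbound, ENNReal.toReal_le_of_le_ofReal (by positivity) ?_⟩
  rw [eLpNorm_exponent_top]
  exact eLpNormEssSup_le_of_ae_bound hbound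
end

section
/- Let N ≥ 3, 1 < p < m, and let ρ : ℝ^N → ℝ be strictly positive with k1 |x|^2 ≤ 1/ρ(x) ≤ k2 |x|^2 for all |x| ≥ e, where k2 ≥ k1 > 0. Let α ∈ (0, 1/(m−1)) and β := (α(m−1)+1)/2. Then there exist constants C > 0 and a > 0 (depending only on m, p, N, α, k1, k2) such that for every T > 0 the function u(x,t) := C (T+t)^{α} F(x,t)^{1/(m−1)}, where F(x,t) := 1 − (log|x|) (T+t)^{−β}/a, satisfies the pointwise differential inequality ∂_t u(x,t) − ρ(x)^{−1} Δ_x (u^m)(x,t) − u(x,t)^p ≤ 0 at every point (x,t) with |x| > e, t > 0 and 0 < F(x,t) < 1. -/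
/-!
Write `s = T + t`, `γ = 1/(m-1)`, `κ = s^(-β)/a`, so that `F = 1 - κ log|x|`. Then `u^m` is the
radial function `(C s^α)^m (1 - κ log|x|)^(γ+1)`, whose Laplacian is
`(C s^α)^m (γ+1) κ |x|⁻² (κ γ F^(γ-1) - (N-2) F^γ)`. Bounding `ρ⁻¹|x|⁻²` between `k1` and `k2`,
all three terms of the operator become multiples of `Z = C s^(α-1) F^(γ-1) ≥ 0`. With
`σ = F s^β`, `θ = (α(p-1)+1)/β - 1`, `D ∝ C^(m-1)/a²`, `K ∝ C^(m-1)/a` and `E = C^(p-1)`, it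
remains to show `γβ + K σ ≤ D + E σ^(θ+1)`; splitting at `σ = D/2K`, this holds once `γβ ≤ D/2`
and `2K ≤ E (D/2K)^θ`. Because `2β = α(m-1)+1`, the second condition is invariant under
`(C, a) ↦ (C δ^α, a δ^β)` while `D` scales like `δ⁻¹`, so both can be arranged.
-/

noncomputable def lap {N : ℕ} (f : EuclideanSpace ℝ (Fin N) → ℝ)
    (x : EuclideanSpace ℝ (Fin N)) : ℝ :=
  ∑ i : Fin N, deriv (deriv fun t : ℝ => f (x + t • EuclideanSpace.single i (1 : ℝ))) 0

open Filter Real Topology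

lemma hasDerivAt_one_sub_log_mul {c q : ℝ} (hq : q ≠ 0) :
    HasDerivAt (fun q => 1 - log q * c) (-(c / q)) q := by
  simpa [div_eq_inv_mul] using ((hasDerivAt_log hq).mul_const c).const_sub 1

section Laplacian

variable {N : ℕ}

lemma lap_eq_of_eventuallyEq {f g : EuclideanSpace ℝ (Fin N) → ℝ}
    {x : EuclideanSpace ℝ (Fin N)} (h : f =ᶠ[𝓝 x] g) : lap f x = lap g x := by
  refine Finset.sum_congr rfl fun i _ => ?_
  have hline : Tendsto (fun τ : ℝ => x + τ • EuclideanSpace.single i (1 : ℝ)) (𝓝 0) (𝓝 x) :=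
    (by fun_prop : Continuous _).tendsto' 0 x (by simp)
  exact (h.comp_tendsto hline).deriv.deriv_eq

lemma norm_add_smul_single_sq (x : EuclideanSpace ℝ (Fin N)) (i : Fin N) (τ : ℝ) :
    ‖x + τ • EuclideanSpace.single i (1 : ℝ)‖ ^ 2 = ‖x‖ ^ 2 + 2 * x i * τ + τ ^ 2 := by
  rw [norm_add_sq_real, inner_smul_right, EuclideanSpace.inner_single_right, norm_smul,
    PiLp.norm_single]
  simp only [Real.ringHom_apply, one_mul, Real.norm_eq_abs, norm_one, mul_one, sq_abs]
  ring

lemma deriv_deriv_comp_quadratic {g g' : ℝ → ℝ} {g'' A b : ℝ}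
    (hg : ∀ᶠ q in 𝓝 A, HasDerivAt g (g' q) q) (hg' : HasDerivAt g' g'' A) :
    deriv (deriv fun τ => g (A + 2 * b * τ + τ ^ 2)) 0 = 4 * b ^ 2 * g'' + 2 * g' A := by
  set q : ℝ → ℝ := fun τ => A + 2 * b * τ + τ ^ 2
  have hq : ∀ τ, HasDerivAt q (2 * b + 2 * τ) τ := fun τ => by
    simpa using (((hasDerivAt_id τ).const_mul (2 * b)).const_add A).fun_add (hasDerivAt_pow 2 τ)
  have hq0 : q 0 = A := by simp [q]
  have hqA : Tendsto q (𝓝 0) (𝓝 A) := hq0 ▸ (hq 0).continuousAt.tendsto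
  have hderiv : deriv (fun τ => g (q τ)) =ᶠ[𝓝 0] fun τ => g' (q τ) * (2 * b + 2 * τ) := by
    filter_upwards [hqA.eventually hg] with τ hτ using (hτ.comp τ (hq τ)).deriv
  have hg'q : HasDerivAt (fun τ => g' (q τ)) (g'' * (2 * b + 2 * 0)) 0 :=
    (hq0 ▸ hg' : HasDerivAt g' g'' (q 0)).comp 0 (hq 0)
  have hlin : HasDerivAt (fun τ : ℝ => 2 * b + 2 * τ) 2 0 := by
    simpa using ((hasDerivAt_id (0 : ℝ)).const_mul 2).const_add (2 * b)
  rw [hderiv.deriv_eq, (hg'q.fun_mul hlin).deriv, hq0]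
  ring

lemma lap_comp_norm_sq {g g' : ℝ → ℝ} {g'' : ℝ} {x : EuclideanSpace ℝ (Fin N)}
    (hg : ∀ᶠ q in 𝓝 (‖x‖ ^ 2), HasDerivAt g (g' q) q) (hg' : HasDerivAt g' g'' (‖x‖ ^ 2)) :
    lap (fun y => g (‖y‖ ^ 2)) x = 4 * ‖x‖ ^ 2 * g'' + 2 * N * g' (‖x‖ ^ 2) := by
  have hterm : ∀ i : Fin N, deriv (deriv fun τ : ℝ =>
      g (‖x + τ • EuclideanSpace.single i (1 : ℝ)‖ ^ 2)) 0 = 4 * x i ^ 2 * g'' + 2 * g' (‖x‖ ^ 2) :=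
    fun i => by
      simp only [norm_add_smul_single_sq]
      rw [deriv_deriv_comp_quadratic hg hg']
  simp only [lap, hterm, Finset.sum_add_distrib, ← Finset.sum_mul, ← Finset.mul_sum,
    ← EuclideanSpace.real_norm_sq_eq, Finset.sum_const, Finset.card_univ, Fintype.card_fin,
    nsmul_eq_mul]
  ring

lemma lap_mul_one_sub_log_norm_rpow (K c e : ℝ) {x : EuclideanSpace ℝ (Fin N)} (hx : x ≠ 0)
    (hB : 1 - log ‖x‖ * c ≠ 0) :
    lap (fun y => K * (1 - log ‖y‖ * c) ^ (e + 1)) x =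
      K * (e + 1) * c / ‖x‖ ^ 2 *
        (c * e * (1 - log ‖x‖ * c) ^ (e - 1) - (N - 2) * (1 - log ‖x‖ * c) ^ e) := by
  set A := ‖x‖ ^ 2
  have hA : 0 < A := by positivity
  set B : ℝ → ℝ := fun q => 1 - log q * (c / 2)
  have hBA : B A = 1 - log ‖x‖ * c := by simp only [B, A, log_pow]; ring
  have hB' : ∀ q, q ≠ 0 → HasDerivAt B (-(c / 2 / q)) q := fun q hq => hasDerivAt_one_sub_log_mul hq
  have hBne : ∀ᶠ q in 𝓝 A, q ≠ 0 ∧ B q ≠ 0 :=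
    (continuousAt_id.eventually_ne hA.ne').and
      ((hB' A hA.ne').continuousAt.eventually_ne (hBA ▸ hB))
  have hg : ∀ᶠ q in 𝓝 A, HasDerivAt (fun q => K * B q ^ (e + 1))
      (-(K * (e + 1) * (c / 2)) * (B q ^ e * q⁻¹)) q := by
    filter_upwards [hBne] with q ⟨hq, hBq⟩
    refine (((hB' q hq).rpow_const (p := e + 1) (Or.inl hBq)).const_mul K).congr_deriv ?_
    rw [add_sub_cancel_right]
    field_simp
  have hg' : HasDerivAt (fun q => -(K * (e + 1) * (c / 2)) * (B q ^ e * q⁻¹))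
      (-(K * (e + 1) * (c / 2)) *
        (-(c / 2 / A) * e * B A ^ (e - 1) * A⁻¹ + B A ^ e * -(A ^ 2)⁻¹)) A :=
    (((hB' A hA.ne').rpow_const (Or.inl (hBA ▸ hB))).fun_mul (hasDerivAt_inv hA.ne')).const_mul _
  have hfun : (fun y : EuclideanSpace ℝ (Fin N) => K * (1 - log ‖y‖ * c) ^ (e + 1)) =
      fun y => K * B (‖y‖ ^ 2) ^ (e + 1) := by
    funext y
    simp only [B, log_pow]
    ring_nf
  rw [hfun, lap_comp_norm_sq hg hg', hBA]
  field_simp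
  ring

lemma lap_rpow_mul_one_sub_log_norm_rpow {K c γ m : ℝ} (hK : 0 ≤ K) (hγm : γ * m = γ + 1)
    {x : EuclideanSpace ℝ (Fin N)} (hx : x ≠ 0) (hB : 0 < 1 - log ‖x‖ * c) :
    lap (fun y => (K * (1 - log ‖y‖ * c) ^ γ) ^ m) x =
      K ^ m * (γ + 1) * c / ‖x‖ ^ 2 *
        (c * γ * (1 - log ‖x‖ * c) ^ (γ - 1) - (N - 2) * (1 - log ‖x‖ * c) ^ γ) := by
  have hcont : ContinuousAt (fun y : EuclideanSpace ℝ (Fin N) => 1 - log ‖y‖ * c) x :=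
    continuousAt_const.sub
      (((continuousAt_log (norm_ne_zero_iff.2 hx)).comp continuous_norm.continuousAt).mul_const c)
  have hev : (fun y => (K * (1 - log ‖y‖ * c) ^ γ) ^ m) =ᶠ[𝓝 x]
      fun y => K ^ m * (1 - log ‖y‖ * c) ^ (γ + 1) := by
    filter_upwards [hcont.eventually (lt_mem_nhds hB)] with y hy
    rw [mul_rpow hK (by positivity), ← rpow_mul hy.le, hγm]
  rw [lap_eq_of_eventuallyEq hev, lap_mul_one_sub_log_norm_rpow _ _ _ hx hB.ne']

end Laplacian

lemma hasDerivAt_mul_rpow_mul_one_sub_mul_rpow_neg {C α β γ L a s : ℝ} (hs : 0 < s)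
    (hF : 1 - L * (s ^ (-β) / a) ≠ 0) :
    HasDerivAt (fun s => C * s ^ α * (1 - L * (s ^ (-β) / a)) ^ γ)
      (C * s ^ (α - 1) * (1 - L * (s ^ (-β) / a)) ^ (γ - 1) *
        (α * (1 - L * (s ^ (-β) / a)) + γ * β * (L * (s ^ (-β) / a)))) s := by
  have hpow : ∀ r, HasDerivAt (fun s => s ^ r) (r * s ^ (r - 1)) s := fun r =>
    hasDerivAt_rpow_const (Or.inl hs.ne')
  have hF' : HasDerivAt (fun s => 1 - L * (s ^ (-β) / a)) (-(L * (-β * s ^ (-β - 1) / a))) s := by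
    simpa using (((hpow (-β)).div_const a).const_mul L).const_sub 1
  refine (((hpow α).const_mul C).fun_mul (hF'.rpow_const (Or.inl hF))).congr_deriv ?_
  have hsα : s ^ α = s ^ (α - 1) * s := by rw [← rpow_add_one hs.ne']; ring_nf
  have hsβ : s ^ (-β - 1) = s ^ (-β) / s := rpow_sub_one hs.ne' _
  have hFγ : (1 - L * (s ^ (-β) / a)) ^ γ =
      (1 - L * (s ^ (-β) / a)) ^ (γ - 1) * (1 - L * (s ^ (-β) / a)) := by
    rw [← rpow_add_one hF]; ring_nf
  rw [hsα, hsβ, hFγ]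
  field_simp

lemma add_mul_le_two_mul_add_mul_rpow {c K ℓ E θ σ : ℝ} (hK : 0 ≤ K) (hℓ : 0 ≤ ℓ) (hθ : 0 ≤ θ)
    (hE : 0 ≤ E) (hσ : 0 ≤ σ) (hc : c ≤ K * ℓ) (hKE : 2 * K ≤ E * ℓ ^ θ) :
    c + K * σ ≤ 2 * K * ℓ + E * σ ^ (θ + 1) := by
  rcases le_or_gt σ ℓ with hσℓ | hℓσ
  · nlinarith [mul_le_mul_of_nonneg_left hσℓ hK, mul_nonneg hE (rpow_nonneg hσ (θ + 1))]
  · calc c + K * σ ≤ 2 * K * σ := by nlinarith [mul_le_mul_of_nonneg_left hℓσ.le hK]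
      _ ≤ E * ℓ ^ θ * σ := mul_le_mul_of_nonneg_right hKE hσ
      _ ≤ E * σ ^ θ * σ := by gcongr
      _ = E * σ ^ (θ + 1) := by rw [rpow_add_one (hℓ.trans_lt hℓσ).ne']; ring
      _ ≤ 2 * K * ℓ + E * σ ^ (θ + 1) := le_add_of_nonneg_left (by positivity)

lemma diffusion_term_ge {α β γ m C a k₁ k₂ n μ s F : ℝ} (hC : 0 < C) (ha : 0 < a) (hs : 0 < s)
    (hF₀ : 0 < F) (hγ : 0 ≤ γ) (hn : 0 ≤ n) (hβm : α * (m - 1) + 1 = 2 * β) (hμ₁ : k₁ ≤ μ)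
    (hμ₂ : μ ≤ k₂) :
    C * s ^ (α - 1) * F ^ (γ - 1) * (C ^ (m - 1) * (γ + 1) * γ * k₁ / a ^ 2
        - C ^ (m - 1) * (γ + 1) * k₂ * n / a * (F * s ^ β)) ≤
      μ * ((C * s ^ α) ^ m * (γ + 1) * (s ^ (-β) / a) *
        (s ^ (-β) / a * γ * F ^ (γ - 1) - n * F ^ γ)) := by
  set w := s ^ β
  have hw : 0 < w := by positivity
  have hK : (C * s ^ α) ^ m = C * s ^ (α - 1) * C ^ (m - 1) * w ^ 2 := by
    rw [mul_rpow hC.le (by positivity), ← rpow_mul hs.le, rpow_sub_one hC.ne',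
      ← rpow_mul_natCast hs.le, show α * m = (α - 1) + β * (2 : ℕ) by push_cast; linarith,
      rpow_add hs]
    field_simp
  have hκ : s ^ (-β) = w⁻¹ := rpow_neg hs.le β
  have hFγ : F ^ γ = F ^ (γ - 1) * F := by rw [← rpow_add_one hF₀.ne']; ring_nf
  set P := (C * s ^ α) ^ m * (γ + 1) * (s ^ (-β) / a) * (s ^ (-β) / a * γ * F ^ (γ - 1))
  set Q := (C * s ^ α) ^ m * (γ + 1) * (s ^ (-β) / a) * (n * F ^ γ)
  have hP : 0 ≤ P := by positivity
  have hQ : 0 ≤ Q := by positivity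
  have hPQ : C * s ^ (α - 1) * F ^ (γ - 1) * (C ^ (m - 1) * (γ + 1) * γ * k₁ / a ^ 2
      - C ^ (m - 1) * (γ + 1) * k₂ * n / a * (F * w)) = k₁ * P - k₂ * Q := by
    simp only [P, Q, hK, hκ, hFγ]
    field_simp
  rw [hPQ, mul_sub]
  linarith [mul_le_mul_of_nonneg_right hμ₁ hP, mul_le_mul_of_nonneg_right hμ₂ hQ]

lemma reaction_term_ge {α β γ θ p C s F : ℝ} (hC : 0 < C) (hs : 0 < s) (hF₀ : 0 < F)
    (hF₁ : F ≤ 1) (hθ : γ * (p - 1) ≤ θ) (hβp : α * (p - 1) + 1 = β * (θ + 1)) :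
    C * s ^ (α - 1) * F ^ (γ - 1) * (C ^ (p - 1) * (F * s ^ β) ^ (θ + 1)) ≤
      (C * s ^ α * F ^ γ) ^ p := by
  have hsp : (s ^ α) ^ p = s ^ (α - 1) * (s ^ β) ^ (θ + 1) := by
    rw [← rpow_mul hs.le, ← rpow_mul hs.le, ← rpow_add hs]; congr 1; linarith
  have hFp : (F ^ γ) ^ p = F ^ (γ - 1) * F ^ (γ * (p - 1) + 1) := by
    rw [← rpow_mul hF₀.le, ← rpow_add hF₀]; congr 1; ring
  calc C * s ^ (α - 1) * F ^ (γ - 1) * (C ^ (p - 1) * (F * s ^ β) ^ (θ + 1))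
      = C * s ^ (α - 1) * F ^ (γ - 1) * (C ^ (p - 1) * (F ^ (θ + 1) * (s ^ β) ^ (θ + 1))) := by
        rw [mul_rpow hF₀.le (by positivity)]
    _ ≤ C * s ^ (α - 1) * F ^ (γ - 1) *
          (C ^ (p - 1) * (F ^ (γ * (p - 1) + 1) * (s ^ β) ^ (θ + 1))) := by
        gcongr _ * (_ * (?_ * _))
        exact rpow_le_rpow_of_exponent_ge hF₀ hF₁ (by linarith)
    _ = (C * s ^ α * F ^ γ) ^ p := by
        rw [mul_rpow (by positivity) (by positivity), mul_rpow hC.le (by positivity), hsp, hFp,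
          rpow_sub_one hC.ne']
        field_simp

lemma subsolution_inequality {α β γ θ m p C a k₁ k₂ n μ s F : ℝ} (hC : 0 < C) (ha : 0 < a)
    (hs : 0 < s) (hF₀ : 0 < F) (hF₁ : F ≤ 1) (hγ : 0 ≤ γ) (hθ₀ : 0 ≤ θ) (hθ : γ * (p - 1) ≤ θ)
    (hαγβ : α ≤ γ * β) (hβm : α * (m - 1) + 1 = 2 * β) (hβp : α * (p - 1) + 1 = β * (θ + 1))
    (hk₁ : 0 < k₁) (hn : 0 < n) (hμ₁ : k₁ ≤ μ) (hμ₂ : μ ≤ k₂)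
    (h₁ : 2 * β / ((γ + 1) * k₁) * a ^ 2 ≤ C ^ (m - 1))
    (h₂ : 2 * (γ + 1) * k₂ * n * C ^ (m - 1) / a ≤ C ^ (p - 1) * (γ * k₁ / (2 * k₂ * n) / a) ^ θ) :
    C * s ^ (α - 1) * F ^ (γ - 1) * (α * F + γ * β * (1 - F))
      - μ * ((C * s ^ α) ^ m * (γ + 1) * (s ^ (-β) / a) *
          (s ^ (-β) / a * γ * F ^ (γ - 1) - n * F ^ γ))
      - (C * s ^ α * F ^ γ) ^ p ≤ 0 := by
  have hk₂ : 0 < k₂ := hk₁.trans_le (hμ₁.trans hμ₂)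
  set Z := C * s ^ (α - 1) * F ^ (γ - 1)
  have hZ : 0 ≤ Z := by positivity
  set K := C ^ (m - 1) * (γ + 1) * k₂ * n / a
  set ℓ := γ * k₁ / (2 * k₂ * n) / a
  have hdiff := diffusion_term_ge hC ha hs hF₀ hγ hn.le hβm hμ₁ hμ₂
  rw [show C ^ (m - 1) * (γ + 1) * γ * k₁ / a ^ 2 = 2 * K * ℓ by simp only [K, ℓ]; field_simp]
    at hdiff
  have hreact := reaction_term_ge hC hs hF₀ hF₁ hθ hβp
  have hc : γ * β ≤ K * ℓ :=
    calc γ * β = γ * ((γ + 1) * k₁ / (2 * a ^ 2)) * (2 * β / ((γ + 1) * k₁) * a ^ 2) := by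
          field_simp
      _ ≤ γ * ((γ + 1) * k₁ / (2 * a ^ 2)) * C ^ (m - 1) := by gcongr
      _ = K * ℓ := by simp only [K, ℓ]; field_simp
  have hKE : 2 * K ≤ C ^ (p - 1) * ℓ ^ θ :=
    calc 2 * K = 2 * (γ + 1) * k₂ * n * C ^ (m - 1) / a := by ring
      _ ≤ _ := h₂
  have hσ := add_mul_le_two_mul_add_mul_rpow (σ := F * s ^ β) (by positivity) (by positivity) hθ₀
    (by positivity) (by positivity) hc hKE
  have hdt : α * F + γ * β * (1 - F) ≤ γ * β := by nlinarith
  linarith [mul_le_mul_of_nonneg_left hdt hZ, mul_le_mul_of_nonneg_left hσ hZ]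

lemma exists_constants {α β θ m p b₁ b₂ R : ℝ} (hb₁ : 0 < b₁) (hb₂ : 0 < b₂) (hR : 0 < R)
    (hpm : p < m) (hβm : α * (m - 1) + 1 = 2 * β) (hβp : α * (p - 1) + 1 = β * (θ + 1)) :
    ∃ C a : ℝ, 0 < C ∧ 0 < a ∧
      b₁ * a ^ 2 ≤ C ^ (m - 1) ∧ b₂ * C ^ (m - 1) / a ≤ C ^ (p - 1) * (R / a) ^ θ := by
  set c₀ := (R ^ θ / b₂) ^ (m - p)⁻¹
  have hc₀ : 0 < c₀ := by positivity
  have hc₀m : c₀ ^ (m - 1) = R ^ θ / b₂ * c₀ ^ (p - 1) := by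
    rw [show m - 1 = (m - p) + (p - 1) by ring, rpow_add hc₀, ← rpow_mul (by positivity),
      inv_mul_cancel₀ (sub_ne_zero.2 hpm.ne'), rpow_one]
  set δ := c₀ ^ (m - 1) / b₁
  have hδ : 0 < δ := by positivity
  have hC : ∀ r, (c₀ * δ ^ α) ^ r = c₀ ^ r * δ ^ (α * r) := fun r => by
    rw [mul_rpow hc₀.le (by positivity), ← rpow_mul hδ.le]
  refine ⟨c₀ * δ ^ α, δ ^ β, by positivity, by positivity, le_of_eq ?_, le_of_eq ?_⟩
  · rw [hC, ← rpow_mul_natCast hδ.le, show β * (2 : ℕ) = α * (m - 1) + 1 by push_cast; linarith,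
      rpow_add_one hδ.ne']
    simp only [δ]
    field_simp
  · have h₁ : δ ^ (α * (m - 1)) = δ ^ (β - 1) * δ ^ β := by
      rw [← rpow_add hδ]; congr 1; linarith
    have h₂ : δ ^ (α * (p - 1)) = δ ^ (β - 1) * δ ^ (β * θ) := by
      rw [← rpow_add hδ]; congr 1; linarith
    rw [hC, hC, hc₀m, h₁, h₂, div_rpow hR.le (by positivity), ← rpow_mul hδ.le]
    field_simp

lemma exponent_bounds {α β γ m p : ℝ} (hp : 1 < p) (hpm : p < m) (hα : 0 < α)
    (hγ : γ * (m - 1) = 1) (hαγ : α < γ) (hβ : β = (α * (m - 1) + 1) / 2) :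
    0 < β ∧ α ≤ γ * β ∧ γ * (p - 1) ≤ (α * (p - 1) + 1) / β - 1 := by
  have hγβ : γ * β = (α + γ) / 2 := by rw [hβ]; linear_combination α / 2 * hγ
  have hβ₀ : 0 < β := by rw [hβ]; nlinarith
  refine ⟨hβ₀, by linarith, ?_⟩
  rw [le_sub_iff_add_le, le_div_iff₀ hβ₀]
  nlinarith [mul_pos (sub_pos.2 hαγ) (sub_pos.2 hpm), mul_pos hα (sub_pos.2 hp)]

lemma exists_constants_subsolution_inequality {α β γ m p k₁ k₂ n : ℝ} (hp : 1 < p)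
    (hpm : p < m) (hα : 0 < α) (hγ : γ * (m - 1) = 1) (hαγ : α < γ)
    (hβ : β = (α * (m - 1) + 1) / 2) (hk₁ : 0 < k₁) (hk₁₂ : k₁ ≤ k₂) (hn : 0 < n) :
    ∃ C a : ℝ, 0 < C ∧ 0 < a ∧ ∀ s F μ : ℝ, 0 < s → 0 < F → F ≤ 1 → k₁ ≤ μ → μ ≤ k₂ →
      C * s ^ (α - 1) * F ^ (γ - 1) * (α * F + γ * β * (1 - F))
        - μ * ((C * s ^ α) ^ m * (γ + 1) * (s ^ (-β) / a) *
            (s ^ (-β) / a * γ * F ^ (γ - 1) - n * F ^ γ))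
        - (C * s ^ α * F ^ γ) ^ p ≤ 0 := by
  obtain ⟨hβ₀, hαγβ, hθ⟩ := exponent_bounds hp hpm hα hγ hαγ hβ
  set θ := (α * (p - 1) + 1) / β - 1
  have hγ₀ : 0 < γ := hα.trans hαγ
  have hk₂ : 0 < k₂ := hk₁.trans_le hk₁₂
  have hβm : α * (m - 1) + 1 = 2 * β := by rw [hβ]; ring
  have hβp : α * (p - 1) + 1 = β * (θ + 1) := by simp only [θ]; field_simp; ring
  obtain ⟨C, a, hC, ha, h₁, h₂⟩ := exists_constants (b₁ := 2 * β / ((γ + 1) * k₁))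
    (b₂ := 2 * (γ + 1) * k₂ * n) (R := γ * k₁ / (2 * k₂ * n))
    (by positivity) (by positivity) (by positivity) hpm hβm hβp
  refine ⟨C, a, hC, ha, fun s F μ hs hF₀ hF₁ hμ₁ hμ₂ => ?_⟩
  exact subsolution_inequality hC ha hs hF₀ hF₁ hγ₀.le ((mul_nonneg hγ₀.le (by linarith)).trans hθ)
    hθ hαγβ hβm hβp hk₁ hn hμ₁ hμ₂ h₁ h₂

theorem outer_subsolution_general
    (N : ℕ) (hN : 3 ≤ N) (m p : ℝ) (hp : 1 < p) (hpm : p < m)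
    (ρ : EuclideanSpace ℝ (Fin N) → ℝ)
    (k1 k2 : ℝ) (hk1 : 0 < k1) (hk12 : k1 ≤ k2)
    (hout : ∀ x : EuclideanSpace ℝ (Fin N), Real.exp 1 ≤ ‖x‖ →
      k1 * ‖x‖ ^ 2 ≤ (ρ x)⁻¹ ∧ (ρ x)⁻¹ ≤ k2 * ‖x‖ ^ 2)
    (α β : ℝ) (hα : 0 < α) (hα' : α < 1 / (m - 1)) (hβ : β = (α * (m - 1) + 1) / 2) :
    ∃ C : ℝ, 0 < C ∧ ∃ a : ℝ, 0 < a ∧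
      ∀ T : ℝ, 0 < T →
        let F : EuclideanSpace ℝ (Fin N) → ℝ → ℝ :=
          fun y s => 1 - Real.log ‖y‖ * (T + s) ^ (-β) / a
        let u : EuclideanSpace ℝ (Fin N) → ℝ → ℝ :=
          fun y s => C * (T + s) ^ α * F y s ^ (1 / (m - 1))
        ∀ (x : EuclideanSpace ℝ (Fin N)) (t : ℝ),
          Real.exp 1 < ‖x‖ → 0 < t → 0 < F x t → F x t < 1 →
          deriv (fun s => u x s) t - (ρ x)⁻¹ * lap (fun y => u y t ^ m) x - u x t ^ p ≤ 0 := by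
  set γ := 1 / (m - 1)
  have hγ : γ * (m - 1) = 1 := one_div_mul_cancel (by linarith)
  have hn : (0 : ℝ) < N - 2 := by
    have : (3 : ℝ) ≤ N := by exact_mod_cast hN
    linarith
  obtain ⟨C, a, hC, ha, hineq⟩ :=
    exists_constants_subsolution_inequality hp hpm hα hγ hα' hβ hk1 hk12 hn
  refine ⟨C, hC, a, ha, ?_⟩
  intro T hT F u x t hx ht hF₀ hF₁
  simp only [u, F, mul_div_assoc] at hF₀ hF₁ ⊢
  have hs : 0 < T + t := by linarith
  have hx₀ : 0 < ‖x‖ := (exp_pos 1).trans hx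
  obtain ⟨hρ₁, hρ₂⟩ := hout x hx.le
  rw [((hasDerivAt_mul_rpow_mul_one_sub_mul_rpow_neg hs hF₀.ne').comp_const_add T t).deriv,
    lap_rpow_mul_one_sub_log_norm_rpow (by positivity) (by linear_combination hγ)
      (norm_pos_iff.1 hx₀) hF₀]
  convert hineq (T + t) _ ((ρ x)⁻¹ / ‖x‖ ^ 2) hs hF₀ hF₁.le
    ((le_div_iff₀ (by positivity)).2 hρ₁) ((div_le_iff₀ (by positivity)).2 hρ₂) using 2
  ring

/-- Subsolution estimate in the outer region: with
`F(x,t) = 1 - log|x| (T+t)^{-β}/a` and `u(x,t) = C (T+t)^α F(x,t)^{1/(m-1)}`, there are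
`C, a > 0` such that for every `T > 0`, at every point with `|x| > e`, `t > 0` and
`0 < F(x,t) < 1`, one has `∂_t u - ρ⁻¹ Δ(u^m) - u^p ≤ 0`. -/
theorem outer_subsolution
    (N : ℕ) (hN : 3 ≤ N) (m p : ℝ) (hp : 1 < p) (hpm : p < m)
    (ρ : EuclideanSpace ℝ (Fin N) → ℝ) (hρpos : ∀ x, 0 < ρ x)
    (k1 k2 : ℝ) (hk1 : 0 < k1) (hk12 : k1 ≤ k2)
    (hout : ∀ x : EuclideanSpace ℝ (Fin N), Real.exp 1 ≤ ‖x‖ →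
      k1 * ‖x‖ ^ 2 ≤ (ρ x)⁻¹ ∧ (ρ x)⁻¹ ≤ k2 * ‖x‖ ^ 2)
    (α β : ℝ) (hα : 0 < α) (hα' : α < 1 / (m - 1)) (hβ : β = (α * (m - 1) + 1) / 2) :
    ∃ C : ℝ, 0 < C ∧ ∃ a : ℝ, 0 < a ∧
      ∀ T : ℝ, 0 < T →
        let F : EuclideanSpace ℝ (Fin N) → ℝ → ℝ :=
          fun y s => 1 - Real.log ‖y‖ * (T + s) ^ (-β) / a
        let u : EuclideanSpace ℝ (Fin N) → ℝ → ℝ :=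
          fun y s => C * (T + s) ^ α * F y s ^ (1 / (m - 1))
        ∀ (x : EuclideanSpace ℝ (Fin N)) (t : ℝ),
          Real.exp 1 < ‖x‖ → 0 < t → 0 < F x t → F x t < 1 →
          deriv (fun s => u x s) t - (ρ x)⁻¹ * lap (fun y => u y t ^ m) x - u x t ^ p ≤ 0 :=
  outer_subsolution_general N hN m p hp hpm ρ k1 k2 hk1 hk12 hout α β hα hα' hβ
end
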